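/- arXiv:1501.00714 — 3 statements merged into one kernel-verified Lean document; each statement's English description precedes it below -/
import Mathlib

section
/- Let J ⊆ [n] and z ∈ Sₙ. Then z ∈ S_J if and only if z∘π(J)⁻¹ lies in the Bruhat interval [e, π(J)⁻¹] of Sₙ, where S_J = {π ∈ Sₙ : π(j) ≥ j for j ∈ J and π(j) ≤ j for j ∉ J}. -/
/-- The number of inversions of `w`, which equals the Coxeter length `ℓ(w)`. -/
def invCount {n : ℕ} (w : Equiv.Perm (Fin n)) : ℕ :=
  (Finset.univ.filter (fun p : Fin n × Fin n => p.1 < p.2 ∧ w p.2 < w p.1)).card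

/-- Cover relation of the strong Bruhat order: `v = t·u` for a transposition
`t`, with `ℓ(v) = ℓ(u) + 1`. -/
def bruhatCover {n : ℕ} (u v : Equiv.Perm (Fin n)) : Prop :=
  (∃ a b : Fin n, a ≠ b ∧ v = Equiv.swap a b * u) ∧ invCount v = invCount u + 1

/-- The strong Bruhat order: transitive (reflexive) closure of the cover
relation. -/
def bruhatLE {n : ℕ} (u v : Equiv.Perm (Fin n)) : Prop :=
  Relation.ReflTransGen bruhatCover u v


/-!
Write `σ = π⁻¹` and `m = n - k`. Since `π` lists `Jᶜ` and then `J` in increasing order, `σ` is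
increasing on `[0, m)` and on `[m, n)`, and `z ∈ S_J` says exactly that `w = z σ` lies below `σ`
on the first `m` positions and above it on the others. For such a Grassmannian `σ` this pointwise
comparison describes `[e, σ]`. A cover `u ⋖ u (p q)` (with `p < q`, `u p < u q`) moves the larger
value to the earlier position, so the counts `#{r ∈ A | u r ∈ B}`, for `A` a lower and `B` an
upper set or vice versa, are monotone along the Bruhat order; this gives necessity. Conversely,
transposing the first position `p` where `w` and `σ` differ with the nearest later position `q`
whose value lies in `(w p, σ p]` is a cover that preserves the comparison, so iterating it climbs
from `w` to `σ`. That `e ≤ w` always holds follows by undoing adjacent descents.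
-/

open Equiv Finset

variable {n : ℕ}

def inversions (w : Perm (Fin n)) : Finset (Fin n × Fin n) :=
  {x | x.1 < x.2 ∧ w x.2 < w x.1}

lemma mem_inversions {w : Perm (Fin n)} {x : Fin n × Fin n} :
    x ∈ inversions w ↔ x.1 < x.2 ∧ w x.2 < w x.1 := by
  simp [inversions]

/-- For `p < q` and `u p < u q`, this involution maps the inversions of `u` injectively into those
of `u * swap p q`, missing `(p, q)`; it is onto the rest when no value of `u` strictly between
the positions `p` and `q` lies in `(u p, u q)`. -/
def crossSwap (p q : Fin n) (x : Fin n × Fin n) : Fin n × Fin n :=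
  (if p < x.2 ∧ x.2 < q then x.1 else swap p q x.1,
   if p < x.1 ∧ x.1 < q then x.2 else swap p q x.2)

lemma crossSwap_involutive (p q : Fin n) : Function.Involutive (crossSwap p q) := by
  rintro ⟨i, j⟩
  simp only [crossSwap, swap_apply_def]
  split_ifs <;> grind

lemma crossSwap_self (p q : Fin n) : crossSwap p q (p, q) = (q, p) := by
  simp [crossSwap]

lemma crossSwap_mem_inversions_mul_swap {u : Perm (Fin n)} {p q : Fin n} (hpq : p < q)
    (hu : u p < u q) {x : Fin n × Fin n} (hx : x ∈ inversions u) :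
    crossSwap p q x ∈ inversions (u * swap p q) := by
  rw [mem_inversions] at hx ⊢
  simp only [crossSwap, Perm.mul_apply, swap_apply_def]
  split_ifs <;> grind

lemma crossSwap_mem_inversions_of_mul_swap {u : Perm (Fin n)} {p q : Fin n} (hpq : p < q)
    (hmid : ∀ r, p < r → r < q → u r < u p ∨ u q < u r)
    {x : Fin n × Fin n} (hx : x ∈ inversions (u * swap p q)) (hne : x ≠ (p, q)) :
    crossSwap p q x ∈ inversions u := by
  rw [mem_inversions] at hx ⊢
  simp only [crossSwap, Perm.mul_apply, swap_apply_def] at hx ⊢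
  split_ifs at hx ⊢ <;> grind

lemma mk_mem_inversions_mul_swap {u : Perm (Fin n)} {p q : Fin n} (hpq : p < q)
    (hu : u p < u q) : (p, q) ∈ inversions (u * swap p q) := by
  simp [mem_inversions, hpq, hu]

lemma mk_notMem_image_crossSwap {u : Perm (Fin n)} {p q : Fin n} (hpq : p < q) :
    (p, q) ∉ (inversions u).image (crossSwap p q) := by
  intro h
  obtain ⟨x, hx, hxpq⟩ := mem_image.mp h
  rw [(crossSwap_involutive p q).eq_iff, crossSwap_self] at hxpq
  rw [hxpq, mem_inversions] at hx
  exact hx.1.not_gt hpq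

lemma image_crossSwap_subset {u : Perm (Fin n)} {p q : Fin n} (hpq : p < q) (hu : u p < u q) :
    (inversions u).image (crossSwap p q) ⊆ inversions (u * swap p q) := by
  intro y hy
  obtain ⟨x, hx, rfl⟩ := mem_image.mp hy
  exact crossSwap_mem_inversions_mul_swap hpq hu hx

lemma invCount_lt_invCount_mul_swap {u : Perm (Fin n)} {p q : Fin n} (hpq : p < q)
    (hu : u p < u q) : invCount u < invCount (u * swap p q) := by
  calc invCount u = #((inversions u).image (crossSwap p q)) :=
        (card_image_of_injective _ (crossSwap_involutive p q).injective).symm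
    _ < #(inversions (u * swap p q)) := card_lt_card <|
        (ssubset_iff_of_subset (image_crossSwap_subset hpq hu)).mpr
          ⟨(p, q), mk_mem_inversions_mul_swap hpq hu, mk_notMem_image_crossSwap hpq⟩

lemma invCount_mul_swap {u : Perm (Fin n)} {p q : Fin n} (hpq : p < q) (hu : u p < u q)
    (hmid : ∀ r, p < r → r < q → u r < u p ∨ u q < u r) :
    invCount (u * swap p q) = invCount u + 1 := by
  have hinv : inversions (u * swap p q) =
      insert (p, q) ((inversions u).image (crossSwap p q)) := by
    refine subset_antisymm (fun y hy => ?_)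
      (insert_subset (mk_mem_inversions_mul_swap hpq hu) (image_crossSwap_subset hpq hu))
    rw [mem_insert, mem_image]
    by_cases hne : y = (p, q)
    · exact .inl hne
    · exact .inr ⟨_, crossSwap_mem_inversions_of_mul_swap hpq hmid hy hne,
        crossSwap_involutive p q y⟩
  change #(inversions _) = #(inversions _) + 1
  rw [hinv, card_insert_of_notMem (mk_notMem_image_crossSwap hpq),
    card_image_of_injective _ (crossSwap_involutive p q).injective]

lemma invCount_le (w : Perm (Fin n)) : invCount w ≤ n * n :=
  (card_filter_le _ _).trans (by simp)

lemma bruhatCover_mul_swap {u : Perm (Fin n)} {p q : Fin n} (hpq : p < q) (hu : u p < u q)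
    (hmid : ∀ r, p < r → r < q → u r < u p ∨ u q < u r) :
    bruhatCover u (u * swap p q) :=
  ⟨⟨u p, u q, hu.ne, mul_swap_eq_swap_mul u p q⟩, invCount_mul_swap hpq hu hmid⟩

lemma bruhatCover.exists_mul_swap {u v : Perm (Fin n)} (h : bruhatCover u v) :
    ∃ p q, p < q ∧ u p < u q ∧ v = u * swap p q := by
  obtain ⟨⟨a, b, hab, rfl⟩, hlen⟩ := h
  have hincr : ∀ p q, p < q → swap a b * u = u * swap p q → u p < u q := by
    intro p q hpq hv
    by_contra! hle
    have hlt := invCount_lt_invCount_mul_swap (u := u * swap p q) hpq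
      (by simpa using hle.lt_of_ne (u.injective.ne hpq.ne'))
    rw [mul_assoc, swap_mul_self, mul_one, ← hv, hlen] at hlt
    omega
  have hv : swap a b * u = u * swap (u.symm a) (u.symm b) := by
    rw [mul_swap_eq_swap_mul]
    simp
  rcases (u.symm.injective.ne hab).lt_or_gt with hlt | hgt
  · exact ⟨_, _, hlt, hincr _ _ hlt hv, hv⟩
  · rw [swap_comm (u.symm a)] at hv
    exact ⟨_, _, hgt, hincr _ _ hgt hv, hv⟩

lemma exists_bruhatCover_of_ne_one {w : Perm (Fin n)} (hw : w ≠ 1) : ∃ u, bruhatCover u w := by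
  have hmono : ¬ StrictMono w := fun h => hw (Equiv.ext fun _ => h.apply_eq)
  obtain ⟨p, q, hpq, hwpq⟩ : ∃ p q, p ⋖ q ∧ ¬ w p < w q := by
    simpa [strictMono_iff_forall_covBy] using hmono
  have hlt : w q < w p := (not_lt.mp hwpq).lt_of_ne (w.injective.ne hpq.lt.ne')
  refine ⟨w * swap p q, ?_⟩
  simpa [mul_assoc] using bruhatCover_mul_swap (u := w * swap p q) hpq.lt (by simpa using hlt)
    fun r hpr hrq => (hpq.2 hpr hrq).elim

lemma bruhatLE_one_left (w : Perm (Fin n)) : bruhatLE 1 w := by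
  induction h : invCount w using Nat.strong_induction_on generalizing w with
  | _ k ih =>
    by_cases hw : w = 1
    · exact hw ▸ .refl
    obtain ⟨u, hu⟩ := exists_bruhatCover_of_ne_one hw
    exact .tail (ih _ (by rw [← h, hu.2]; omega) u rfl) hu

lemma bruhatLE_of_forall_exists_bruhatCover {σ : Perm (Fin n)} (P : Perm (Fin n) → Prop)
    (hP : ∀ w, P w → w ≠ σ → ∃ w', bruhatCover w w' ∧ P w') {w : Perm (Fin n)} (hw : P w) :
    bruhatLE w σ := by
  induction h : n * n - invCount w using Nat.strong_induction_on generalizing w with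
  | _ k ih =>
    by_cases hwσ : w = σ
    · exact hwσ ▸ .refl
    obtain ⟨w', hcov, hw'⟩ := hP w hw hwσ
    have := invCount_le w'
    exact .head hcov (ih _ (by rw [← h, hcov.2] at *; omega) hw' rfl)

section RankCounts

variable {α : Type*} [Fintype α] [DecidableEq α]

lemma card_filter_apply_mem (w : Perm α) (B : Finset α) : #{r | w r ∈ B} = #B :=
  card_equiv w (by simp)

lemma card_filter_add_card_compl (w : Perm α) (A B : Finset α) :
    #{r ∈ A | w r ∈ B} + #Aᶜ = #{r ∈ Aᶜ | w r ∈ Bᶜ} + #B := by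
  have h1 : #{r ∈ A | w r ∈ B} + #{r ∈ Aᶜ | w r ∈ B} = #B := by
    rw [← card_filter_apply_mem w B,
      ← card_filter_add_card_filter_not (s := {r | w r ∈ B}) (· ∈ A)]
    congr 1 <;> (congr 1; ext; simp [and_comm])
  have h2 : #{r ∈ Aᶜ | w r ∈ B} + #{r ∈ Aᶜ | w r ∈ Bᶜ} = #Aᶜ := by
    simpa using card_filter_add_card_filter_not (s := Aᶜ) (fun r => w r ∈ B)
  omega

end RankCounts

variable {A B : Finset (Fin n)}

lemma bruhatCover.card_filter_le {u v : Perm (Fin n)} (h : bruhatCover u v)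
    (hA : IsLowerSet (A : Set (Fin n))) (hB : IsUpperSet (B : Set (Fin n))) :
    #{r ∈ A | u r ∈ B} ≤ #{r ∈ A | v r ∈ B} := by
  obtain ⟨p, q, hpq, hu, rfl⟩ := h.exists_mul_swap
  have hpA : q ∈ A → p ∈ A := @hA q p hpq.le
  have hqB : u p ∈ B → u q ∈ B := @hB (u p) (u q) hu.le
  refine card_le_card_of_injOn (fun r => if r = q ∧ u p ∉ B then p else r) ?_ ?_
  · intro r hr
    simp only [coe_filter, Set.mem_ofPred_eq, Perm.mul_apply] at hr ⊢
    split_ifs <;> grind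
  · intro r₁ hr₁ r₂ hr₂ he
    simp only [coe_filter, Set.mem_ofPred_eq] at hr₁ hr₂ he
    split_ifs at he <;> grind

lemma bruhatLE.card_filter_le {u v : Perm (Fin n)} (h : bruhatLE u v)
    (hA : IsLowerSet (A : Set (Fin n))) (hB : IsUpperSet (B : Set (Fin n))) :
    #{r ∈ A | u r ∈ B} ≤ #{r ∈ A | v r ∈ B} := by
  induction h with
  | refl => exact le_rfl
  | tail _ hcov ih => exact ih.trans (hcov.card_filter_le hA hB)

lemma bruhatLE.card_filter_le_of_isUpperSet {u v : Perm (Fin n)} (h : bruhatLE u v)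
    (hA : IsUpperSet (A : Set (Fin n))) (hB : IsLowerSet (B : Set (Fin n))) :
    #{r ∈ A | u r ∈ B} ≤ #{r ∈ A | v r ∈ B} := by
  have := h.card_filter_le (A := Aᶜ) (B := Bᶜ) (by simpa using hA.compl) (by simpa using hB.compl)
  have hu := card_filter_add_card_compl u Aᶜ Bᶜ
  have hv := card_filter_add_card_compl v Aᶜ Bᶜ
  simp only [compl_compl] at hu hv
  omega

lemma forall_notMem_of_card_filter_le {u v : Perm (Fin n)}
    (h : #{r ∈ A | u r ∈ B} ≤ #{r ∈ A | v r ∈ B}) (hv : ∀ r ∈ A, v r ∉ B) :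
    ∀ r ∈ A, u r ∉ B := by
  rwa [filter_eq_empty_iff.mpr hv, card_empty, Nat.le_zero, card_eq_zero,
    filter_eq_empty_iff] at h

def IsGrassmannian (m : ℕ) (σ : Perm (Fin n)) : Prop :=
  StrictMonoOn σ {p | (p : ℕ) < m} ∧ StrictMonoOn σ {p | m ≤ (p : ℕ)}

def SplitLE (m : ℕ) (w σ : Perm (Fin n)) : Prop :=
  ∀ p : Fin n, ((p : ℕ) < m → w p ≤ σ p) ∧ (m ≤ (p : ℕ) → σ p ≤ w p)

variable {m : ℕ} {w σ : Perm (Fin n)}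

lemma bruhatLE.splitLE (hσ : IsGrassmannian m σ) (h : bruhatLE w σ) : SplitLE m w σ := by
  refine fun p => ⟨fun hp => not_lt.mp ?_, fun hp => not_lt.mp ?_⟩
  · have hle := h.card_filter_le (A := Iic p) (B := Ioi (σ p))
      (by simpa using isLowerSet_Iic p) (by simpa using isUpperSet_Ioi (σ p))
    have hσp : ∀ r ∈ Iic p, σ r ∉ Ioi (σ p) := fun r hr => by
      rw [mem_Iic] at hr
      simpa using (hσ.1.le_iff_le ((Fin.le_def.mp hr).trans_lt hp) hp).mpr hr
    simpa using forall_notMem_of_card_filter_le hle hσp p (by simp)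
  · have hle := h.card_filter_le_of_isUpperSet (A := Ici p) (B := Iio (σ p))
      (by simpa using isUpperSet_Ici p) (by simpa using isLowerSet_Iio (σ p))
    have hσp : ∀ r ∈ Ici p, σ r ∉ Iio (σ p) := fun r hr => by
      rw [mem_Ici] at hr
      simpa using (hσ.2.le_iff_le hp (hp.trans (Fin.le_def.mp hr))).mpr hr
    simpa using forall_notMem_of_card_filter_le hle hσp p (by simp)

lemma Equiv.Perm.eq_of_forall_le (h : ∀ r, σ r ≤ w r) : w = σ := by
  have hsum : ∑ r, (σ r : ℕ) = ∑ r, (w r : ℕ) := by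
    rw [Equiv.sum_comp σ (fun v : Fin n => (v : ℕ)), Equiv.sum_comp w (fun v : Fin n => (v : ℕ))]
  have := (sum_eq_sum_iff_of_le fun r _ => Fin.le_def.mp (h r)).mp hsum
  exact Equiv.ext fun r => Fin.ext (this r (mem_univ r)).symm

lemma SplitLE.exists_lt_of_ne (hw : SplitLE m w σ) (hne : w ≠ σ) :
    ∃ p : Fin n, (p : ℕ) < m ∧ w p < σ p ∧ ∀ r < p, w r = σ r := by
  obtain ⟨p, hp⟩ := exists_minimal_of_wellFoundedLT (fun r => w r ≠ σ r) <| by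
    by_contra! h
    exact hne (Equiv.ext h)
  have hagree : ∀ r < p, w r = σ r := fun r hr => not_not.mp (hp.not_prop_of_lt hr)
  have hpm : (p : ℕ) < m := by
    by_contra! hmp
    refine hp.prop (congrFun (congrArg _ (Perm.eq_of_forall_le fun r => ?_)) p)
    by_cases hrm : (r : ℕ) < m
    · exact (hagree r (Fin.lt_def.mpr (hrm.trans_le hmp))).ge
    · exact (hw r).2 (not_lt.mp hrm)
  exact ⟨p, hpm, ((hw p).1 hpm).lt_of_ne hp.prop, hagree⟩

/-- If `w p < σ q`, then every position where `w` takes a value in `[σ q, σ p]` is one where `σ`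
does, and `p` is one where only `σ` does: the two preimages of this interval, which have the same
size, would be strictly nested. -/
lemma SplitLE.le_apply_of_forall_notMem_Ioc (hσ : StrictMonoOn σ {r | m ≤ (r : ℕ)})
    (hw : SplitLE m w σ) {p q : Fin n} (hpq : p < q) (hmq : m ≤ (q : ℕ))
    (hagree : ∀ r < p, w r = σ r) (hwq : w q ≤ σ p)
    (hmin : ∀ r, p < r → r < q → w r ∉ Set.Ioc (w p) (σ p)) : σ q ≤ w p := by
  by_contra! hlt
  have hcard : #{r | w r ∈ Icc (σ q) (σ p)} = #{r | σ r ∈ Icc (σ q) (σ p)} := by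
    rw [card_filter_apply_mem, card_filter_apply_mem]
  refine hcard.not_lt (card_lt_card ⟨fun r hr => ?_, fun hsub => ?_⟩)
  · simp only [mem_filter, mem_univ, true_and, mem_Icc] at hr ⊢
    rcases lt_trichotomy r p with hrp | rfl | hpr
    · rwa [← hagree r hrp]
    · exact absurd hr.1 hlt.not_ge
    rcases lt_trichotomy r q with hrq | rfl | hqr
    · exact absurd ⟨hlt.trans_le hr.1, hr.2⟩ (hmin r hpr hrq)
    · exact ⟨le_rfl, ((hw r).2 hmq).trans hwq⟩
    · have hmr : m ≤ (r : ℕ) := hmq.trans (Fin.le_def.mp hqr.le)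
      exact ⟨(hσ hmq hmr hqr).le, ((hw r).2 hmr).trans hr.2⟩
  · have hσq : σ q ≤ σ p := ((hw q).2 hmq).trans hwq
    have := hsub (by simp [hσq] : p ∈ ({r | σ r ∈ Icc (σ q) (σ p)} : Finset (Fin n)))
    simp only [mem_filter, mem_univ, true_and, mem_Icc] at this
    exact hlt.not_ge this.1

lemma SplitLE.exists_bruhatCover (hσ : StrictMonoOn σ {r | m ≤ (r : ℕ)})
    (hw : SplitLE m w σ) (hne : w ≠ σ) : ∃ w', bruhatCover w w' ∧ SplitLE m w' σ := by
  obtain ⟨p, hpm, hwp, hagree⟩ := hw.exists_lt_of_ne hne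
  have hpσ : p < w.symm (σ p) := by
    rcases lt_trichotomy (w.symm (σ p)) p with h | h | h
    · have := hagree _ h
      rw [apply_symm_apply] at this
      exact absurd (σ.injective this) h.ne'
    · exact absurd (by simpa using (congrArg w h).symm) hwp.ne
    · exact h
  obtain ⟨q, hq⟩ := exists_minimal_of_wellFoundedLT
    (fun r => p < r ∧ w r ∈ Set.Ioc (w p) (σ p)) ⟨_, hpσ, by simpa using hwp⟩
  obtain ⟨hpq, hwpq, hwqp⟩ := hq.prop
  have hmin : ∀ r, p < r → r < q → w r ∉ Set.Ioc (w p) (σ p) :=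
    fun r hpr hrq hr => hq.not_prop_of_lt hrq ⟨hpr, hr⟩
  have hmid : ∀ r, p < r → r < q → w r < w p ∨ w q < w r := by
    intro r hpr hrq
    rcases not_and_or.mp (hmin r hpr hrq) with h | h
    · exact .inl ((not_lt.mp h).lt_of_ne (w.injective.ne hpr.ne'))
    · exact .inr (hwqp.trans_lt (not_le.mp h))
  refine ⟨w * swap p q, bruhatCover_mul_swap hpq hwpq hmid, fun r => ?_⟩
  rcases eq_or_ne r p with rfl | hrp
  · simp only [Perm.mul_apply, swap_apply_left]
    exact ⟨fun _ => hwqp, fun h => absurd hpm (not_lt.mpr h)⟩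
  rcases eq_or_ne r q with rfl | hrq
  · simp only [Perm.mul_apply, swap_apply_right]
    exact ⟨fun hrm => hwpq.le.trans ((hw r).1 hrm),
      fun hmr => hw.le_apply_of_forall_notMem_Ioc hσ hpq hmr hagree hwqp hmin⟩
  · simpa [swap_apply_of_ne_of_ne hrp hrq] using hw r

lemma bruhatLE_iff_splitLE (hσ : IsGrassmannian m σ) : bruhatLE w σ ↔ SplitLE m w σ :=
  ⟨bruhatLE.splitLE hσ, bruhatLE_of_forall_exists_bruhatCover (SplitLE m · σ)
    (fun _ hw hne => hw.exists_bruhatCover hσ.2 hne)⟩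

lemma Finset.strictMonoOn_card_filter_lt {α : Type*} [LinearOrder α] (s : Finset α) :
    StrictMonoOn (fun j => #{i ∈ s | i < j}) s := by
  intro a ha b _ hab
  refine card_lt_card ⟨fun i hi => ?_, fun h => ?_⟩
  · rw [mem_filter] at hi ⊢
    exact ⟨hi.1, hi.2.trans hab⟩
  · exact lt_irrefl a (mem_filter.mp (h (mem_filter.mpr ⟨ha, hab⟩))).2

lemma Equiv.Perm.strictMonoOn_inv {α : Type*} [LinearOrder α] {π : Perm α} {s t : Set α}
    (h : StrictMonoOn π s) (hts : ∀ x ∈ t, π⁻¹ x ∈ s) : StrictMonoOn (⇑π⁻¹) t :=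
  fun a ha b hb hab => (h.lt_iff_lt (hts a ha) (hts b hb)).mp (by simpa using hab)

section Shuffle

variable {k : ℕ} {J : Finset (Fin n)} {π : Perm (Fin n)}

lemma mem_iff_sub_le_apply (hk : J.card = k)
    (hJ : ∀ j ∈ J, (π j : ℕ) = (n - k) + (J.filter (· < j)).card)
    (hJc : ∀ h : Fin n, h ∉ J → (π h : ℕ) = ((Jᶜ).filter (· < h)).card) (j : Fin n) :
    j ∈ J ↔ n - k ≤ π j := by
  by_cases hj : j ∈ J
  · simp [hj, hJ j hj]
  · have : #{h ∈ Jᶜ | h < j} < #Jᶜ :=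
      card_lt_card (filter_ssubset.mpr ⟨j, mem_compl.mpr hj, lt_irrefl j⟩)
    rw [card_compl, Fintype.card_fin, hk] at this
    simp only [hj, false_iff, not_le]
    rwa [hJc j hj]

lemma isGrassmannian_inv (hk : J.card = k)
    (hJ : ∀ j ∈ J, (π j : ℕ) = (n - k) + (J.filter (· < j)).card)
    (hJc : ∀ h : Fin n, h ∉ J → (π h : ℕ) = ((Jᶜ).filter (· < h)).card) :
    IsGrassmannian (n - k) π⁻¹ := by
  have hmem := mem_iff_sub_le_apply hk hJ hJc
  constructor
  · refine Perm.strictMonoOn_inv (s := ↑Jᶜ) (fun a ha b hb hab => ?_) fun x hx => ?_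
    · rw [Fin.lt_def, hJc a (mem_compl.mp ha), hJc b (mem_compl.mp hb)]
      exact Jᶜ.strictMonoOn_card_filter_lt ha hb hab
    · simp only [coe_compl, Set.mem_compl_iff, mem_coe, hmem, Perm.coe_inv, apply_symm_apply,
        not_le]
      exact hx
  · refine Perm.strictMonoOn_inv (s := ↑J) (fun a ha b hb hab => ?_) fun x hx => ?_
    · rw [Fin.lt_def, hJ a ha, hJ b hb]
      exact Nat.add_lt_add_left (J.strictMonoOn_card_filter_lt ha hb hab) _
    · simpa [hmem] using hx

lemma splitLE_mul_inv_iff (hJ : ∀ j, j ∈ J ↔ m ≤ (π j : ℕ)) (z : Perm (Fin n)) :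
    SplitLE m (z * π⁻¹) π⁻¹ ↔ ∀ j, (j ∈ J → j ≤ z j) ∧ (j ∉ J → z j ≤ j) := by
  rw [SplitLE, π.symm.forall_congr_left]
  simp [hJ, and_comm]

end Shuffle

/-- `z ∈ S_J` if and only if `z ∘ π(J)⁻¹` lies in the Bruhat interval
`[e, π(J)⁻¹]`. -/
theorem stmt_10 (n k : ℕ) (J : Finset (Fin n)) (hk : J.card = k)
    (π : Equiv.Perm (Fin n))
    (hJ : ∀ j ∈ J, (π j : ℕ) = (n - k) + (J.filter (· < j)).card)
    (hJc : ∀ h : Fin n, h ∉ J → (π h : ℕ) = ((Jᶜ).filter (· < h)).card)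
    (z : Equiv.Perm (Fin n)) :
    ((∀ j : Fin n, (j ∈ J → j ≤ z j) ∧ (j ∉ J → z j ≤ j)) ↔
      (bruhatLE 1 (z * π⁻¹) ∧ bruhatLE (z * π⁻¹) π⁻¹)) := by
  rw [← splitLE_mul_inv_iff (mem_iff_sub_le_apply hk hJ hJc) z,
    ← bruhatLE_iff_splitLE (isGrassmannian_inv hk hJ hJc)]
  exact ⟨fun h => ⟨bruhatLE_one_left _, h⟩, And.right⟩
end

section
/- Let J ⊆ [n], let π, π̂ ∈ S_J with π̂ = (i ℓ)∘π for values i < ℓ (i.e., π̂ is obtained from π by swapping the values i and ℓ), and suppose there exists λ ∈ ℝⁿ such that the linear functional x ↦ ∑ₕ λₕ x(h) over S_J is maximized precisely at π and π̂. Then every j with i < j < ℓ is a fixed point of π (and of π̂). -/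
/-!
Write `a = π⁻¹ i`, `b = π⁻¹ l`. Since `π` and `(i l) ∘ π` have the same score, `λ a = λ b =: μ`.
Comparing `π` with `(π c l) ∘ π` and `(i π c) ∘ π` for a position `c` with `i < π c < l`
(these stay in `S_J` because `a`, `b` may take any value in `[i, l]`) gives, by the uniqueness of
the maximizers, `λ c < μ` if `c` may take the value `l` and `λ c > μ` if `c` may take the value `i`.
A position outside `(i, l)` could take both, so `π` maps `(i, l)` onto itself; then each term of
`∑_{c ∈ (i, l)} (λ c - μ) (π c - c)` is `≤ 0`, and `< 0` unless `π c = c`, whereas this sum is the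
gain of `π` over the permutation that agrees with `π` outside `(i, l)` and fixes `(i, l)`.
-/

open Equiv Finset

section Admissible

variable {α : Type*} [Preorder α] {J : Finset α} {p x y z : α}

def AdmissibleAt (J : Finset α) (p x : α) : Prop :=
  (p ∈ J → p ≤ x) ∧ (p ∉ J → x ≤ p)

/-- The paper's `S_J`. -/
def permsJ (J : Finset α) : Set (Perm α) :=
  {z | ∀ p, AdmissibleAt J p (z p)}

theorem admissibleAt_self : AdmissibleAt J p p :=
  ⟨fun _ => le_rfl, fun _ => le_rfl⟩

theorem AdmissibleAt.of_le_of_le (hx : AdmissibleAt J p x) (hy : AdmissibleAt J p y)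
    (hxz : x ≤ z) (hzy : z ≤ y) : AdmissibleAt J p z :=
  ⟨fun hp => (hx.1 hp).trans hxz, fun hp => hzy.trans (hy.2 hp)⟩

theorem AdmissibleAt.of_lt (hx : AdmissibleAt J p x) (hpx : p < x) (hpy : p ≤ y) :
    AdmissibleAt J p y :=
  ⟨fun _ => hpy, fun hp => absurd (hx.2 hp) hpx.not_ge⟩

theorem AdmissibleAt.of_gt (hx : AdmissibleAt J p x) (hxp : x < p) (hyp : y ≤ p) :
    AdmissibleAt J p y :=
  ⟨fun hp => absurd (hx.1 hp) hxp.not_ge, fun _ => hyp⟩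

theorem swap_mul_mem_permsJ [DecidableEq α] {π : Perm α} (hπ : π ∈ permsJ J) {u v : α}
    (hu : AdmissibleAt J (π⁻¹ u) v) (hv : AdmissibleAt J (π⁻¹ v) u) :
    swap u v * π ∈ permsJ J := by
  intro p
  rw [Perm.mul_apply, swap_apply_def]
  split_ifs with h₁ h₂
  · simpa [← h₁] using hu
  · simpa [← h₂] using hv
  · exact hπ p

end Admissible

theorem sum_mul_swap_mul {α R : Type*} [Fintype α] [DecidableEq α] [CommRing R]
    (w v : α → R) (π : Perm α) (u u' : α) :
    ∑ h, w h * v ((swap u u' * π) h) =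
      ∑ h, w h * v (π h) + (w (π⁻¹ u) - w (π⁻¹ u')) * (v u' - v u) := by
  rcases eq_or_ne u u' with rfl | hne
  · simp
  have hdiff : ∑ h, (w h * v ((swap u u' * π) h) - w h * v (π h)) =
      (w (π⁻¹ u) - w (π⁻¹ u')) * (v u' - v u) := by
    rw [Fintype.sum_eq_add (π⁻¹ u) (π⁻¹ u') (by simpa using hne)]
    · simp only [Perm.mul_apply, Perm.coe_inv, apply_symm_apply, swap_apply_left,
        swap_apply_right]
      ring
    · rintro h ⟨hu, hu'⟩
      rw [Perm.mul_apply, swap_apply_of_ne_of_ne (by rintro rfl; simp at hu)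
        (by rintro rfl; simp at hu'), sub_self]
  rw [← hdiff, sum_sub_distrib]
  ring

theorem Equiv.Perm.exists_eq_self_on_of_apply_mem_iff {α : Type*} [DecidableEq α] (π : Perm α)
    (s : Finset α) (hs : ∀ x, π x ∈ s ↔ x ∈ s) :
    ∃ y : Perm α, (∀ x ∈ s, y x = x) ∧ ∀ x ∉ s, y x = π x := by
  have hs' : ∀ x, π x ∉ s ↔ x ∉ s := fun x => not_congr (hs x)
  exact ⟨Perm.ofSubtype (π.subtypePerm hs'),
    fun x hx => Perm.ofSubtype_apply_of_not_mem _ (not_not.mpr hx),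
    fun x hx => Perm.ofSubtype_subtypePerm_of_mem hs' hx⟩

theorem Equiv.Perm.apply_mem_iff_of_apply_mem {α : Type*} (π : Perm α)
    {s : Finset α} (hs : ∀ x, π x ∈ s → x ∈ s) (x : α) : π x ∈ s ↔ x ∈ s := by
  refine ⟨hs x, fun hx => ?_⟩
  exact perm_symm_on_of_perm_on_finset (f := π⁻¹) (fun y hy => hs _ (by simpa using hy)) hx

section Score

variable {n : ℕ}

def score (lam : Fin n → ℝ) (x : Perm (Fin n)) : ℝ :=
  ∑ h, lam h * ((x h : ℕ) : ℝ)

theorem score_swap_mul (lam : Fin n → ℝ) (π : Perm (Fin n)) (u u' : Fin n) :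
    score lam (swap u u' * π) =
      score lam π + (lam (π⁻¹ u) - lam (π⁻¹ u')) * (((u' : ℕ) : ℝ) - ((u : ℕ) : ℝ)) :=
  sum_mul_swap_mul lam (fun k => ((k : ℕ) : ℝ)) π u u'

theorem score_sub_score_eq_sum (lam : Fin n → ℝ) (c : ℝ) {π y : Perm (Fin n)}
    {s : Finset (Fin n)} (hs : ∀ x, π x ∈ s ↔ x ∈ s) (hy_in : ∀ x ∈ s, y x = x)
    (hy_out : ∀ x ∉ s, y x = π x) :
    score lam π - score lam y = ∑ h ∈ s, (lam h - c) * (((π h : ℕ) : ℝ) - ((h : ℕ) : ℝ)) := by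
  have hperm : ∑ h ∈ s, ((π h : ℕ) : ℝ) = ∑ h ∈ s, ((h : ℕ) : ℝ) :=
    Finset.sum_equiv π (fun x => (hs x).symm) (fun _ _ => rfl)
  have hout : ∑ h ∈ s, lam h * (((π h : ℕ) : ℝ) - ((y h : ℕ) : ℝ)) =
      ∑ h, lam h * (((π h : ℕ) : ℝ) - ((y h : ℕ) : ℝ)) :=
    Finset.sum_subset (Finset.subset_univ s) fun x _ hx => by rw [hy_out x hx, sub_self, mul_zero]
  simp only [score, ← Finset.sum_sub_distrib, ← mul_sub, ← hout]
  simp only [sub_mul, Finset.sum_sub_distrib, ← Finset.mul_sum, hperm, sub_self, mul_zero,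
    sub_zero]
  exact Finset.sum_congr rfl fun x hx => by rw [hy_in x hx]

end Score

structure MaximizedExactlyAtSwap {n : ℕ} (J : Finset (Fin n)) (lam : Fin n → ℝ)
    (π : Perm (Fin n)) (i l : Fin n) : Prop where
  mem : π ∈ permsJ J
  swap_mem : swap i l * π ∈ permsJ J
  score_swap : score lam (swap i l * π) = score lam π
  score_lt : ∀ x ∈ permsJ J, x ≠ π → x ≠ swap i l * π → score lam x < score lam π

namespace MaximizedExactlyAtSwap

variable {n : ℕ} {J : Finset (Fin n)} {lam : Fin n → ℝ} {π : Perm (Fin n)} {i l c : Fin n}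

theorem score_le (h : MaximizedExactlyAtSwap J lam π i l) {x : Perm (Fin n)}
    (hx : x ∈ permsJ J) : score lam x ≤ score lam π := by
  by_cases h₁ : x = π
  · rw [h₁]
  by_cases h₂ : x = swap i l * π
  · rw [h₂, h.score_swap]
  exact (h.score_lt x hx h₁ h₂).le

theorem score_lt_of_apply_ne (h : MaximizedExactlyAtSwap J lam π i l) {x : Perm (Fin n)}
    (hx : x ∈ permsJ J) (hci : π c ≠ i) (hcl : π c ≠ l) (hxc : x c ≠ π c) :
    score lam x < score lam π :=
  h.score_lt x hx (fun hxπ => hxc (by rw [hxπ]))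
    (fun hxπ => hxc (by rw [hxπ, Perm.mul_apply, swap_apply_of_ne_of_ne hci hcl]))

theorem lam_inv_eq (h : MaximizedExactlyAtSwap J lam π i l) (hil : i < l) :
    lam (π⁻¹ i) = lam (π⁻¹ l) := by
  have hpos : (0 : ℝ) < ((l : ℕ) : ℝ) - ((i : ℕ) : ℝ) := sub_pos.mpr (by exact_mod_cast hil)
  have hzero := h.score_swap
  rw [score_swap_mul, add_eq_left, mul_eq_zero] at hzero
  exact sub_eq_zero.mp (hzero.resolve_right hpos.ne')

theorem admissibleAt_inv_left (h : MaximizedExactlyAtSwap J lam π i l) {x : Fin n}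
    (hix : i ≤ x) (hxl : x ≤ l) : AdmissibleAt J (π⁻¹ i) x := by
  have hi : AdmissibleAt J (π⁻¹ i) i := by simpa using h.mem (π⁻¹ i)
  have hl : AdmissibleAt J (π⁻¹ i) l := by simpa using h.swap_mem (π⁻¹ i)
  exact hi.of_le_of_le hl hix hxl

theorem admissibleAt_inv_right (h : MaximizedExactlyAtSwap J lam π i l) {x : Fin n}
    (hix : i ≤ x) (hxl : x ≤ l) : AdmissibleAt J (π⁻¹ l) x := by
  have hi : AdmissibleAt J (π⁻¹ l) i := by simpa using h.swap_mem (π⁻¹ l)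
  have hl : AdmissibleAt J (π⁻¹ l) l := by simpa using h.mem (π⁻¹ l)
  exact hi.of_le_of_le hl hix hxl

theorem lam_lt_of_admissibleAt_right (h : MaximizedExactlyAtSwap J lam π i l) (hi : i < π c)
    (hl : π c < l) (hc : AdmissibleAt J c l) : lam c < lam (π⁻¹ l) := by
  have hmem : swap (π c) l * π ∈ permsJ J :=
    swap_mul_mem_permsJ h.mem (by simpa using hc) (h.admissibleAt_inv_right hi.le hl.le)
  have hlt := h.score_lt_of_apply_ne hmem hi.ne' hl.ne (c := c) (by simpa using hl.ne')
  have hpos : (0 : ℝ) < ((l : ℕ) : ℝ) - ((π c : ℕ) : ℝ) := sub_pos.mpr (by exact_mod_cast hl)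
  rw [score_swap_mul, show π⁻¹ (π c) = c by simp, add_lt_iff_neg_left] at hlt
  exact sub_neg.mp (neg_of_mul_neg_left hlt hpos.le)

theorem lam_gt_of_admissibleAt_left (h : MaximizedExactlyAtSwap J lam π i l) (hi : i < π c)
    (hl : π c < l) (hc : AdmissibleAt J c i) : lam (π⁻¹ i) < lam c := by
  have hmem : swap i (π c) * π ∈ permsJ J :=
    swap_mul_mem_permsJ h.mem (h.admissibleAt_inv_left hi.le hl.le) (by simpa using hc)
  have hlt := h.score_lt_of_apply_ne hmem hi.ne' hl.ne (c := c) (by simpa using hi.ne)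
  have hpos : (0 : ℝ) < ((π c : ℕ) : ℝ) - ((i : ℕ) : ℝ) := sub_pos.mpr (by exact_mod_cast hi)
  rw [score_swap_mul, show π⁻¹ (π c) = c by simp, add_lt_iff_neg_left] at hlt
  exact sub_neg.mp (neg_of_mul_neg_left hlt hpos.le)

theorem apply_mem_Ioo_iff (h : MaximizedExactlyAtSwap J lam π i l) (hil : i < l) (c : Fin n) :
    π c ∈ Ioo i l ↔ c ∈ Ioo i l := by
  refine π.apply_mem_iff_of_apply_mem (fun c hc => ?_) c
  rw [mem_Ioo] at hc ⊢
  obtain ⟨hi, hl⟩ := hc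
  have hπc : AdmissibleAt J c (π c) := h.mem c
  suffices ¬(AdmissibleAt J c i ∧ AdmissibleAt J c l) by
    by_contra hc
    rcases not_and_or.mp hc with hc | hc <;> rw [not_lt] at hc
    · exact this ⟨hπc.of_lt (hc.trans_lt hi) hc, hπc.of_lt (hc.trans_lt hi) (hc.trans hil.le)⟩
    · exact this ⟨hπc.of_gt (hl.trans_le hc) (hil.le.trans hc), hπc.of_gt (hl.trans_le hc) hc⟩
  rintro ⟨hci, hcl⟩
  have := h.lam_inv_eq hil
  linarith [h.lam_lt_of_admissibleAt_right hi hl hcl, h.lam_gt_of_admissibleAt_left hi hl hci]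

theorem sub_mul_sub_neg (h : MaximizedExactlyAtSwap J lam π i l) (hil : i < l)
    (hc : c ∈ Ioo i l) (hne : π c ≠ c) :
    (lam c - lam (π⁻¹ l)) * (((π c : ℕ) : ℝ) - ((c : ℕ) : ℝ)) < 0 := by
  obtain ⟨hi, hl⟩ := mem_Ioo.mp ((h.apply_mem_Ioo_iff hil c).mpr hc)
  have hπc : AdmissibleAt J c (π c) := h.mem c
  rcases hne.lt_or_gt with hlt | hgt
  · have hlam := h.lam_gt_of_admissibleAt_left hi hl (hπc.of_gt hlt (mem_Ioo.mp hc).1.le)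
    rw [← h.lam_inv_eq hil]
    exact mul_neg_of_pos_of_neg (by linarith) (sub_neg.mpr (by exact_mod_cast hlt))
  · have hlam := h.lam_lt_of_admissibleAt_right hi hl (hπc.of_lt hgt (mem_Ioo.mp hc).2.le)
    exact mul_neg_of_neg_of_pos (by linarith) (sub_pos.mpr (by exact_mod_cast hgt))

theorem apply_eq_self (h : MaximizedExactlyAtSwap J lam π i l) (hil : i < l) {j : Fin n}
    (hj : j ∈ Ioo i l) : π j = j := by
  by_contra hne
  obtain ⟨y, hy_in, hy_out⟩ :=
    π.exists_eq_self_on_of_apply_mem_iff (Ioo i l) (h.apply_mem_Ioo_iff hil)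
  have hy : y ∈ permsJ J := fun p => by
    by_cases hp : p ∈ Ioo i l
    · rw [hy_in p hp]; exact admissibleAt_self
    · rw [hy_out p hp]; exact h.mem p
  have hneg : ∑ c ∈ Ioo i l, (lam c - lam (π⁻¹ l)) * (((π c : ℕ) : ℝ) - ((c : ℕ) : ℝ)) < 0 := by
    refine Finset.sum_neg' (fun c hc => ?_) ⟨j, hj, h.sub_mul_sub_neg hil hj hne⟩
    by_cases hcc : π c = c
    · rw [hcc, sub_self, mul_zero]
    · exact (h.sub_mul_sub_neg hil hc hcc).le
  rw [← score_sub_score_eq_sum lam _ (h.apply_mem_Ioo_iff hil) hy_in hy_out] at hneg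
  linarith [h.score_le hy]

end MaximizedExactlyAtSwap

/-- If `π, π̂ ∈ S_J` differ by swapping the values `i < ℓ`, and some linear
functional `λ` is maximized over `S_J` precisely at `π` and `π̂`, then every
value `j` with `i < j < ℓ` is a fixed point of `π` and of `π̂`. -/
theorem stmt_11 (n : ℕ) (J : Finset (Fin n)) (SJ : Set (Equiv.Perm (Fin n)))
    (hSJ : SJ = {z : Equiv.Perm (Fin n) | ∀ j : Fin n, (j ∈ J → j ≤ z j) ∧ (j ∉ J → z j ≤ j)})
    (lam : Fin n → ℝ) (π πh : Equiv.Perm (Fin n)) (i l : Fin n) (hil : i < l)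
    (hπ : π ∈ SJ) (hπh : πh ∈ SJ) (hswap : πh = Equiv.swap i l * π)
    (hmax : ∀ x ∈ SJ, ∑ h : Fin n, lam h * ((x h : ℕ) : ℝ)
      ≤ ∑ h : Fin n, lam h * ((π h : ℕ) : ℝ))
    (hval : ∑ h : Fin n, lam h * ((πh h : ℕ) : ℝ) = ∑ h : Fin n, lam h * ((π h : ℕ) : ℝ))
    (hprec : ∀ x ∈ SJ, ∑ h : Fin n, lam h * ((x h : ℕ) : ℝ)
      = ∑ h : Fin n, lam h * ((π h : ℕ) : ℝ) → x = π ∨ x = πh) :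
    ∀ j : Fin n, i < j → j < l → π j = j ∧ πh j = j := by
  subst hSJ hswap
  have h : MaximizedExactlyAtSwap J lam π i l :=
    { mem := hπ
      swap_mem := hπh
      score_swap := hval
      score_lt := fun x hx h₁ h₂ => (hmax x hx).lt_of_ne fun heq =>
        (hprec x hx heq).elim h₁ h₂ }
  intro j hij hjl
  have hπj : π j = j := h.apply_eq_self hil (mem_Ioo.mpr ⟨hij, hjl⟩)
  exact ⟨hπj, by rw [Perm.mul_apply, hπj, swap_apply_of_ne_of_ne hij.ne' hjl.ne]⟩
end

section
/- Let λ ∈ ℝⁿ have coordinates forming a permutation of the values 1, n², n⁴, …, n^{2(n-1)}, and let h be the index with λ_h = n^{2(n-1)}. Suppose x, y ∈ Sₙ (viewed as points in ℝⁿ) satisfy x(h) ≥ y(h) + 1. Then λ·x > λ·y. -/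
/-!
Split `λ·x - λ·y` into the term at `h` and the rest. The term at `h` is at least
`λ_h = n^{2(n-1)}`. Every other weight is at most `n^{2(n-2)}` and every other coordinate
difference is at most `n - 1` in absolute value, so the rest is at least
`-(n-1)² n^{2(n-2)} > -n^{2(n-1)}`.
-/

open Finset

theorem sum_mul_pos_of_dominant {ι : Type*} [Fintype ι] [DecidableEq ι] {w d : ι → ℝ} {h : ι}
    {M D : ℝ} (hw : ∀ j, 0 ≤ w j) (hM : ∀ j ≠ h, w j ≤ M) (hD : ∀ j ≠ h, |d j| ≤ D)
    (hdh : 1 ≤ d h) (hdom : ((Fintype.card ι : ℝ) - 1) * (M * D) < w h) :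
    0 < ∑ j, w j * d j := by
  have hterm : ∀ j ∈ univ.erase h, -(M * D) ≤ w j * d j := by
    intro j hj
    have hjh := ne_of_mem_erase hj
    have : |w j * d j| ≤ M * D := by
      rw [abs_mul, abs_of_nonneg (hw j)]
      exact mul_le_mul (hM j hjh) (hD j hjh) (abs_nonneg _) ((hw j).trans (hM j hjh))
    exact (abs_le.mp this).1
  have hrest : ((Fintype.card ι : ℝ) - 1) * -(M * D) ≤ ∑ j ∈ univ.erase h, w j * d j := by
    have := card_nsmul_le_sum _ _ _ hterm
    rwa [card_erase_of_mem (mem_univ h), card_univ, nsmul_eq_mul,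
      Nat.cast_pred (Fintype.card_pos_iff.mpr ⟨h⟩)] at this
  have hmain : w h ≤ w h * d h := le_mul_of_one_le_right (hw h) hdh
  rw [← add_sum_erase _ _ (mem_univ h)]
  linarith

theorem Fin.abs_val_sub_val_le {n : ℕ} (i k : Fin n) :
    |((i : ℕ) : ℝ) - ((k : ℕ) : ℝ)| ≤ n - 1 := by
  have hi : ((i : ℕ) : ℝ) + 1 ≤ n := by exact_mod_cast i.isLt
  have hk : ((k : ℕ) : ℝ) + 1 ≤ n := by exact_mod_cast k.isLt
  rw [abs_sub_le_iff]
  constructor <;> linarith [(i : ℕ).cast_nonneg (α := ℝ), (k : ℕ).cast_nonneg (α := ℝ)]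

theorem sub_one_sq_mul_pow_lt_pow_add_two {a : ℝ} (ha : 1 ≤ a) (k : ℕ) :
    (a - 1) ^ 2 * a ^ k < a ^ (k + 2) := by
  rw [pow_add, mul_comm (a ^ k)]
  have : 0 < a ^ k := by positivity
  gcongr
  nlinarith

/-- If the coordinates of `λ` are a permutation of `1, n², n⁴, …, n^{2(n-1)}`,
`λ_h = n^{2(n-1)}` is the largest one, and `x, y ∈ Sₙ` satisfy
`x(h) ≥ y(h) + 1`, then `λ·x > λ·y`. -/
theorem stmt_12 (n : ℕ) (lam : Fin n → ℝ) (σ : Equiv.Perm (Fin n))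
    (hlam : ∀ j : Fin n, lam j = (n : ℝ) ^ (2 * (σ j : ℕ)))
    (h : Fin n) (hh : lam h = (n : ℝ) ^ (2 * (n - 1)))
    (x y : Equiv.Perm (Fin n)) (hxy : (y h : ℕ) + 1 ≤ (x h : ℕ)) :
    ∑ j : Fin n, lam j * ((y j : ℕ) : ℝ) < ∑ j : Fin n, lam j * ((x j : ℕ) : ℝ) := by
  obtain hn | hn := lt_or_ge n 2
  · have := (x h).isLt
    omega
  have hn1 : (1 : ℝ) < n := by exact_mod_cast hn
  have hσh : (σ h : ℕ) = n - 1 := by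
    have := pow_right_injective₀ (by positivity) hn1.ne' ((hlam h).symm.trans hh)
    omega
  have hweight : ∀ j ≠ h, lam j ≤ (n : ℝ) ^ (2 * (n - 2)) := by
    intro j hj
    have hσj : (σ j : ℕ) ≠ σ h := fun e => hj (σ.injective (Fin.ext e))
    have := (σ j).isLt
    rw [hlam j]
    exact pow_le_pow_right₀ hn1.le (by omega)
  have hgap : (1 : ℝ) ≤ ((x h : ℕ) : ℝ) - ((y h : ℕ) : ℝ) := by
    have : ((y h : ℕ) : ℝ) + 1 ≤ (x h : ℕ) := by exact_mod_cast hxy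
    linarith
  have hdom : ((n : ℝ) - 1) * ((n : ℝ) ^ (2 * (n - 2)) * (n - 1)) < lam h := by
    rw [hh, show 2 * (n - 1) = 2 * (n - 2) + 2 by omega]
    calc _ = ((n : ℝ) - 1) ^ 2 * (n : ℝ) ^ (2 * (n - 2)) := by ring
      _ < _ := sub_one_sq_mul_pow_lt_pow_add_two hn1.le _
  rw [← sub_pos, ← sum_sub_distrib]
  simp_rw [← mul_sub]
  refine sum_mul_pos_of_dominant (fun j => by rw [hlam j]; positivity) hweight
    (fun j _ => Fin.abs_val_sub_val_le (x j) (y j)) hgap ?_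
  rwa [Fintype.card_fin]
end
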